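/- For every prime p and every integer n ≥ 1 there exists a finite abelian p-group A of cardinality exactly p^{⌊n(1+log n)⌋} (log the natural logarithm, ⌊·⌋ the floor) such that every finite abelian group B of p-power order with |B| ≤ p^n is isomorphic to a subgroup of A. (One may take A = ⊕_{i=1}^{n} ℤ/p^{⌊n/i⌋}ℤ.) -/

import Mathlib

/-!
Write a finite abelian `p`-group `B` of order `p ^ k ≤ p ^ n` as `⨁ ℤ/p^{e_i}` with
`e_1 ≥ e_2 ≥ ⋯` and `∑ e_i = k ≤ n`. Since the exponents decrease, `j * e_j ≤ ∑ e_i ≤ n`, so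
`e_j ≤ ⌊n / j⌋` and the `j`-th cyclic factor of `B` embeds into the `j`-th factor of
`⨁_{j=1}^n ℤ/p^{⌊n/j⌋}`. The order of the latter is `p ^ ∑_j ⌊n/j⌋ ≤ p ^ (n * H_n)`, and
`H_n ≤ 1 + log n`; a cyclic factor pads the order up to `p ^ ⌊n (1 + log n)⌋`.
-/

open Finset

theorem Antitone.succ_nsmul_le_sum {M : Type*} [AddCommMonoid M] [PartialOrder M]
    [IsOrderedAddMonoid M] [CanonicallyOrderedAdd M] {m : ℕ} {u : Fin m → M} (hu : Antitone u)
    (k : Fin m) : (k.1 + 1) • u k ≤ ∑ j, u j :=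
  calc (k.1 + 1) • u k = #(Iic k) • u k := by rw [Fin.card_Iic]
    _ ≤ ∑ j ∈ Iic k, u j := card_nsmul_le_sum _ _ _ fun j hj => hu (mem_Iic.1 hj)
    _ ≤ ∑ j, u j := sum_le_sum_of_subset (subset_univ _)

theorem Fintype.exists_antitone_comp_equiv_fin {ι α : Type*} [Fintype ι] [LinearOrder α]
    (e : ι → α) : ∃ g : Fin (Fintype.card ι) ≃ ι, Antitone (e ∘ g) :=
  let g₀ := (Fintype.equivFin ι).symm
  ⟨(Tuple.sort (OrderDual.toDual ∘ e ∘ g₀)).trans g₀,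
    monotone_toDual_comp_iff.1 (Tuple.monotone_sort (OrderDual.toDual ∘ e ∘ g₀))⟩

/-- Rank the `e i` in decreasing order: the one of rank `r` satisfies `(r + 1) * e i ≤ n`. -/
theorem exists_injective_le_div_succ {ι : Type*} [Fintype ι] {n : ℕ} (e : ι → ℕ)
    (he : ∀ i, 0 < e i) (hsum : ∑ i, e i ≤ n) :
    ∃ f : ι → Fin n, Function.Injective f ∧ ∀ i, e i ≤ n / (f i + 1) := by
  obtain ⟨g, hg⟩ := Fintype.exists_antitone_comp_equiv_fin e
  have hrank : ∀ i, ((g.symm i : ℕ) + 1) * e i ≤ n := fun i =>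
    calc ((g.symm i : ℕ) + 1) * e i = ((g.symm i : ℕ) + 1) • (e ∘ g) (g.symm i) := by simp
      _ ≤ ∑ j, (e ∘ g) j := hg.succ_nsmul_le_sum _
      _ = ∑ i, e i := g.sum_comp e
      _ ≤ n := hsum
  refine ⟨fun i => ⟨g.symm i, ?_⟩, fun i j h => g.symm.injective (Fin.ext (Fin.mk.inj h)),
    fun i => (Nat.le_div_iff_mul_le (Nat.succ_pos _)).2 (by rw [mul_comm]; exact hrank i)⟩
  nlinarith [hrank i, he i]

theorem sum_div_succ_le_floor_mul_one_add_log (n : ℕ) :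
    ∑ j : Fin n, n / (j + 1) ≤ ⌊(n : ℝ) * (1 + Real.log n)⌋₊ := by
  apply Nat.le_floor
  calc ((∑ j : Fin n, n / (j + 1) : ℕ) : ℝ) ≤ ∑ j : Fin n, (n : ℝ) / (j + 1) := by
        push_cast
        gcongr with j
        exact Nat.cast_div_le.trans (by push_cast; rfl)
    _ = n * harmonic n := by
        rw [Fin.sum_univ_eq_sum_range (fun i : ℕ => (n : ℝ) / (i + 1)), harmonic]
        push_cast
        simp [mul_sum, div_eq_mul_inv]
    _ ≤ n * (1 + Real.log n) := by gcongr; exact harmonic_le_one_add_log n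

theorem exists_injective_zmod_addOrderOf {G : Type*} [AddGroup G] (g : G) :
    ∃ φ : ZMod (addOrderOf g) →+ G, Function.Injective φ :=
  let e := (Int.quotientZMultiplesNatEquivZMod _).symm.trans
    (QuotientAddGroup.quotientAddEquivOfEq (zmultiplesHom_ker_eq g).symm)
  ⟨(QuotientAddGroup.kerLift _).comp e.toAddMonoidHom,
    (QuotientAddGroup.kerLift_injective _).comp e.injective⟩

theorem ZMod.exists_injective_addMonoidHom_of_dvd {a b : ℕ} (hb : b ≠ 0) (hab : a ∣ b) :
    ∃ φ : ZMod a →+ ZMod b, Function.Injective φ := by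
  have hord : addOrderOf ((b / a : ℕ) : ZMod b) = a := by
    rw [ZMod.addOrderOf_coe _ hb, Nat.gcd_eq_right (Nat.div_dvd_of_dvd hab),
      Nat.div_div_self hab hb]
  exact hord ▸ exists_injective_zmod_addOrderOf _

theorem exists_injective_pi_addMonoidHom {ι κ : Type*} [Fintype ι] [DecidableEq κ]
    {M : ι → Type*} {N : κ → Type*} [∀ i, AddCommMonoid (M i)] [∀ j, AddCommMonoid (N j)]
    {f : ι → κ} (hf : Function.Injective f) (c : ∀ i, M i →+ N (f i))
    (hc : ∀ i, Function.Injective (c i)) :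
    ∃ φ : (∀ i, M i) →+ ∀ j, N j, Function.Injective φ := by
  let φ : (∀ i, M i) →+ ∀ j, N j :=
    ∑ i, (AddMonoidHom.single N (f i)).comp ((c i).comp (Pi.evalAddMonoidHom M i))
  have hφ : ∀ x i, φ x (f i) = c i (x i) := by
    intro x i
    simp only [φ, AddMonoidHom.finsetSum_apply, Finset.sum_apply, AddMonoidHom.comp_apply,
      AddMonoidHom.single_apply, Pi.evalAddMonoidHom_apply]
    rw [sum_eq_single i (fun i' _ hi' => Pi.single_eq_of_ne (hf.ne hi').symm _) (by simp),
      Pi.single_eq_same]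
  exact ⟨φ, fun x y hxy => funext fun i => hc i (by rw [← hφ, ← hφ, hxy])⟩

theorem exists_addEquiv_pi_zmod_pow_of_card_eq {G : Type*} [AddCommGroup G] [Finite G]
    {p k : ℕ} (hp : p.Prime) (hG : Nat.card G = p ^ k) :
    ∃ (ι : Type) (_ : Fintype ι) (e : ι → ℕ),
      (∀ i, 0 < e i) ∧ ∑ i, e i = k ∧ Nonempty (G ≃+ ∀ i, ZMod (p ^ e i)) := by
  obtain ⟨ι, _, d, hd, ⟨eqv⟩⟩ := AddCommGroup.equiv_directSum_zmod_of_finite' G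
  let eqv' := eqv.trans (DirectSum.addEquivProd _)
  have hprod : ∏ i, d i = p ^ k := by
    rw [← hG, Nat.card_congr eqv'.toEquiv, Nat.card_pi]
    simp [Nat.card_zmod]
  have hpow : ∀ i, ∃ e, 0 < e ∧ d i = p ^ e := fun i => by
    obtain ⟨e, -, he⟩ := (Nat.dvd_prime_pow hp).1 (hprod ▸ dvd_prod_of_mem d (mem_univ i))
    refine ⟨e, Nat.pos_of_ne_zero ?_, he⟩
    rintro rfl
    simpa [he] using hd i
  choose e he hde using hpow
  obtain rfl : d = fun i => p ^ e i := funext hde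
  refine ⟨ι, inferInstance, e, he, Nat.pow_right_injective hp.two_le ?_, ⟨eqv'⟩⟩
  simpa [prod_pow_eq_pow_sum] using hprod

abbrev UniversalAbelianPGroup (p n : ℕ) : Type :=
  ∀ j : Fin n, ZMod (p ^ (n / (j + 1)))

theorem card_universalAbelianPGroup (p n : ℕ) :
    Nat.card (UniversalAbelianPGroup p n) = p ^ ∑ j : Fin n, n / (j + 1) := by
  simp [Nat.card_pi, Nat.card_zmod, prod_pow_eq_pow_sum]

theorem exists_injective_addMonoidHom_universalAbelianPGroup {G : Type*} [AddCommGroup G]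
    [Finite G] {p k n : ℕ} (hp : p.Prime) (hG : Nat.card G = p ^ k) (hkn : k ≤ n) :
    ∃ φ : G →+ UniversalAbelianPGroup p n, Function.Injective φ := by
  obtain ⟨ι, _, e, he, rfl, ⟨eqv⟩⟩ := exists_addEquiv_pi_zmod_pow_of_card_eq hp hG
  obtain ⟨f, hf, hef⟩ := exists_injective_le_div_succ e he hkn
  have hcyclic : ∀ i, ∃ c : ZMod (p ^ e i) →+ ZMod (p ^ (n / (f i + 1))),
      Function.Injective c := fun i =>
    ZMod.exists_injective_addMonoidHom_of_dvd (pow_ne_zero _ hp.ne_zero) (pow_dvd_pow p (hef i))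
  choose c hc using hcyclic
  obtain ⟨φ, hφ⟩ := exists_injective_pi_addMonoidHom
    (N := fun j : Fin n => ZMod (p ^ (n / (j + 1)))) hf c hc
  exact ⟨φ.comp eqv.toAddMonoidHom, hφ.comp eqv.injective⟩

theorem exists_abelian_pGroup_containing_all_general (p n : ℕ) (hp : p.Prime) :
    ∃ (A : Type) (_ : CommGroup A) (_ : Finite A),
      Nat.card A = p ^ ⌊(n : ℝ) * (1 + Real.log n)⌋₊ ∧
      (∃ k : ℕ, Nat.card A = p ^ k) ∧
      ∀ (B : Type) (_ : CommGroup B) (_ : Finite B),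
        (∃ k : ℕ, Nat.card B = p ^ k) → Nat.card B ≤ p ^ n →
        ∃ φ : B →* A, Function.Injective φ := by
  have : NeZero p := ⟨hp.ne_zero⟩
  set S := ∑ j : Fin n, n / (j + 1)
  set T := ⌊(n : ℝ) * (1 + Real.log n)⌋₊
  let A := Multiplicative (UniversalAbelianPGroup p n × ZMod (p ^ (T - S)))
  have hcard : Nat.card A = p ^ T := by
    rw [Nat.card_congr Multiplicative.toAdd, Nat.card_prod, card_universalAbelianPGroup,
      Nat.card_zmod, ← pow_add, Nat.add_sub_cancel' (sum_div_succ_le_floor_mul_one_add_log n)]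
  refine ⟨A, inferInstance, inferInstance, hcard, ⟨T, hcard⟩, ?_⟩
  rintro B _ _ ⟨k, hk⟩ hle
  obtain ⟨φ, hφ⟩ := exists_injective_addMonoidHom_universalAbelianPGroup (G := Additive B) hp hk
    ((Nat.pow_le_pow_iff_right hp.one_lt).1 (hk ▸ hle))
  exact ⟨AddMonoidHom.toMultiplicativeRight ((AddMonoidHom.inl _ _).comp φ),
    Multiplicative.ofAdd.injective.comp ((Prod.mk_left_injective 0).comp hφ)⟩

/-- For every prime `p` and every integer `n ≥ 1` there exists a finite abelian `p`-group `A`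
of cardinality exactly `p ^ ⌊n * (1 + log n)⌋` such that every finite abelian group `B` of
`p`-power order with `|B| ≤ p ^ n` is isomorphic to a subgroup of `A` (i.e. embeds into `A`). -/
theorem exists_abelian_pGroup_containing_all (p n : ℕ) (hp : p.Prime) (hn : 1 ≤ n) :
    ∃ (A : Type) (_ : CommGroup A) (_ : Finite A),
      Nat.card A = p ^ ⌊(n : ℝ) * (1 + Real.log n)⌋₊ ∧
      (∃ k : ℕ, Nat.card A = p ^ k) ∧
      ∀ (B : Type) (_ : CommGroup B) (_ : Finite B),
        (∃ k : ℕ, Nat.card B = p ^ k) → Nat.card B ≤ p ^ n →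
        ∃ φ : B →* A, Function.Injective φ :=
  exists_abelian_pGroup_containing_all_general p n hp
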